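/- arXiv:2605.18634 — 2 statements merged into one kernel-verified Lean document; each statement's English description precedes it below -/
import Mathlib

section
/- The graph 2K₂, consisting of four vertices and two disjoint edges, has harmonious chromatic number 3, while vc(2K₂) = 2, Δ(2K₂) = 1, and 2K₂ is 1-degenerate; in particular h(2K₂) > vc(2K₂) + Δ(2K₂)(Δ(2K₂)−1). -/
def IsHarmonious {V : Type*} {α : Type*} (G : SimpleGraph V) (c : V → α) : Prop :=
  (∀ ⦃u v : V⦄, G.Adj u v → c u ≠ c v) ∧
  ∀ ⦃u v x y : V⦄, G.Adj u v → G.Adj x y →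
    s(c u, c v) = s(c x, c y) → s(u, v) = s(x, y)

noncomputable def hchrom {V : Type*} [Fintype V] (G : SimpleGraph V) : ℕ :=
  sInf {k | ∃ c : V → Fin k, IsHarmonious G c}

noncomputable def vcNum {V : Type*} [Fintype V] (G : SimpleGraph V) : ℕ :=
  sInf {n | ∃ S : Finset V, S.card = n ∧ ∀ ⦃u v : V⦄, G.Adj u v → u ∈ S ∨ v ∈ S}

def Degenerate {V : Type*} (d : ℕ) (G : SimpleGraph V) [DecidableRel G.Adj] : Prop :=
  ∀ S : Finset V, S.Nonempty → ∃ v ∈ S, (S.filter (fun u => G.Adj v u)).card ≤ d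

/-- The graph `2K₂`: four vertices and two disjoint edges. -/
def twoK2 : SimpleGraph (Fin 4) :=
  SimpleGraph.fromRel (fun a b => (a = 0 ∧ b = 1) ∨ (a = 2 ∧ b = 3))

instance : DecidableRel twoK2.Adj := fun a b => by
  unfold twoK2 SimpleGraph.fromRel
  exact inferInstanceAs (Decidable (_ ∧ _))

/-! A harmonious colouring maps the edges injectively to pairs of distinct colours, so a graph
with two edges needs three colours; `![0, 1, 0, 2]` shows three suffice for `2K₂`. A vertex cover
of `2K₂` must meet both edges, which are disjoint. -/

open Finset

namespace IsHarmonious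

variable {V α : Type*} {G : SimpleGraph V} {c : V → α}

lemma of_injective (hc : Function.Injective c) : IsHarmonious G c :=
  ⟨fun _ _ h => hc.ne h.ne, fun _ _ _ _ _ _ h => by rwa [← Sym2.map_mk, ← Sym2.map_mk,
    (Sym2.map.injective hc).eq_iff] at h⟩

lemma card_edgeFinset_le [Fintype V] [DecidableRel G.Adj] [Fintype α] [DecidableEq α]
    (hc : IsHarmonious G c) : #G.edgeFinset ≤ (Fintype.card α).choose 2 := by
  rw [← SimpleGraph.card_edgeFinset_top_eq_card_choose_two]
  refine card_le_card_of_injOn (Sym2.map c) ?maps ?inj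
  case maps =>
    rintro ⟨u, v⟩ huv
    simpa using hc.1 (by simpa using huv)
  case inj =>
    rintro ⟨u, v⟩ huv ⟨x, y⟩ hxy h
    exact hc.2 (by simpa using huv) (by simpa using hxy) h

end IsHarmonious

lemma exists_isHarmonious_hchrom {V : Type*} [Fintype V] (G : SimpleGraph V) :
    ∃ c : V → Fin (hchrom G), IsHarmonious G c :=
  Nat.sInf_mem (s := {k | ∃ c : V → Fin k, IsHarmonious G c})
    ⟨_, _, .of_injective (Fintype.equivFin V).injective⟩

lemma card_edgeFinset_le_hchrom_choose_two {V : Type*} [Fintype V] (G : SimpleGraph V)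
    [DecidableRel G.Adj] : #G.edgeFinset ≤ (hchrom G).choose 2 := by
  obtain ⟨c, hc⟩ := exists_isHarmonious_hchrom G
  simpa using hc.card_edgeFinset_le

lemma exists_vertexCover_vcNum {V : Type*} [Fintype V] (G : SimpleGraph V) :
    ∃ S : Finset V, #S = vcNum G ∧ ∀ ⦃u v : V⦄, G.Adj u v → u ∈ S ∨ v ∈ S :=
  Nat.sInf_mem (s := {n | ∃ S : Finset V, #S = n ∧ ∀ ⦃u v : V⦄, G.Adj u v → u ∈ S ∨ v ∈ S})
    ⟨_, univ, rfl, fun u _ _ => .inl (mem_univ u)⟩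

lemma degenerate_of_maxDegree_le {V : Type*} [Fintype V] (G : SimpleGraph V) [DecidableRel G.Adj]
    {d : ℕ} (h : G.maxDegree ≤ d) : Degenerate d G := by
  rintro S ⟨v, hv⟩
  refine ⟨v, hv, le_trans ?_ ((G.degree_le_maxDegree v).trans h)⟩
  rw [← SimpleGraph.card_neighborFinset_eq_degree]
  exact card_le_card fun u hu => by simpa using (mem_filter.1 hu).2

lemma twoK2_isRegularOfDegree_one : twoK2.IsRegularOfDegree 1 := by
  intro v
  fin_cases v <;> decide

lemma twoK2_isHarmonious : IsHarmonious twoK2 ![(0 : Fin 3), 1, 0, 2] :=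
  ⟨by decide, by decide⟩

lemma hchrom_twoK2 : hchrom twoK2 = 3 := by
  refine le_antisymm (Nat.sInf_le ⟨_, twoK2_isHarmonious⟩) (Nat.lt_of_not_le fun h => ?_)
  have hedges : #twoK2.edgeFinset = 2 := by decide
  have := card_edgeFinset_le_hchrom_choose_two twoK2
  interval_cases hchrom twoK2 <;> simp_all

lemma two_le_card_of_covers_twoK2 {S : Finset (Fin 4)}
    (hS : ∀ ⦃u v : Fin 4⦄, twoK2.Adj u v → u ∈ S ∨ v ∈ S) : 2 ≤ #S := by
  obtain ⟨a, ha, haS⟩ : ∃ a ∈ ({0, 1} : Finset (Fin 4)), a ∈ S := by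
    rcases hS (u := 0) (v := 1) (by decide) with h | h <;> exact ⟨_, by simp, h⟩
  obtain ⟨b, hb, hbS⟩ : ∃ b ∈ ({2, 3} : Finset (Fin 4)), b ∈ S := by
    rcases hS (u := 2) (v := 3) (by decide) with h | h <;> exact ⟨_, by simp, h⟩
  have hab : a ≠ b := by
    rintro rfl
    simp only [mem_insert, mem_singleton] at ha hb
    omega
  calc 2 = #{a, b} := (card_pair hab).symm
    _ ≤ #S := card_le_card (insert_subset haS (singleton_subset_iff.2 hbS))

lemma vcNum_twoK2 : vcNum twoK2 = 2 := by
  refine le_antisymm (Nat.sInf_le ⟨{0, 2}, rfl, by decide⟩) ?_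
  obtain ⟨S, hcard, hS⟩ := exists_vertexCover_vcNum twoK2
  exact hcard ▸ two_le_card_of_covers_twoK2 hS

theorem stmt5 :
    hchrom twoK2 = 3 ∧ vcNum twoK2 = 2 ∧ twoK2.maxDegree = 1 ∧
      Degenerate 1 twoK2 ∧
      vcNum twoK2 + twoK2.maxDegree * (twoK2.maxDegree - 1) < hchrom twoK2 := by
  have hmax : twoK2.maxDegree = 1 := twoK2_isRegularOfDegree_one.maxDegree_eq
  refine ⟨hchrom_twoK2, vcNum_twoK2, hmax, degenerate_of_maxDegree_le twoK2 hmax.le, ?_⟩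
  rw [hchrom_twoK2, vcNum_twoK2, hmax]
  decide
end

section
/- Let G be a graph with diameter at least 3. Then there exist vertices u, v with dist_G(u,v) ≥ 3 such that the graph H = G ∘ uv obtained by identifying u and v satisfies h(H) = h(G). -/
def DistAtLeastThree {V : Type*} (G : SimpleGraph V) (u v : V) : Prop :=
  u ≠ v ∧ ¬ G.Adj u v ∧ ∀ w : V, ¬ (G.Adj u w ∧ G.Adj w v)

/-- The graph `G ∘ uv` obtained by identifying `v` with `u`: vertex `v` is
removed and `u` becomes adjacent to all former neighbors of `v`. -/
def identify {V : Type*} (G : SimpleGraph V) (u v : V) :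
    SimpleGraph {x : V // x ≠ v} where
  Adj a b := a ≠ b ∧
    (G.Adj a.1 b.1 ∨ (a.1 = u ∧ G.Adj v b.1) ∨ (b.1 = u ∧ G.Adj a.1 v))
  symm := by
    constructor
    rintro a b ⟨hab, h | ⟨h1, h2⟩ | ⟨h1, h2⟩⟩
    · exact ⟨hab.symm, Or.inl h.symm⟩
    · exact ⟨hab.symm, Or.inr (Or.inr ⟨h1, h2.symm⟩)⟩
    · exact ⟨hab.symm, Or.inr (Or.inl ⟨h1, h2.symm⟩)⟩
  loopless := ⟨fun a h => h.1 rfl⟩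

/-!
Identifying two vertices `u, v` at distance at least 3 maps `G` homomorphically onto `G ∘ uv`
and is injective on edges, so harmonious colourings of `G ∘ uv` pull back: `h(G) ≤ h(G ∘ uv)`.
Conversely, a harmonious colouring of `G` in which `u` and `v` share a colour descends to `G ∘ uv`.
Two vertices sharing a colour in a harmonious colouring are at distance at least 3, so if an optimal
colouring of `G` is not injective, identifying two equally coloured vertices preserves `h`. It
cannot be injective once some pair is at distance at least 3, since then
`h(G) ≤ h(G ∘ uv) ≤ |V| - 1 < |V| ≤ h(G)`.
-/

section Harmonious

variable {V W α : Type*}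

lemma IsHarmonious.of_injective_s9 {G : SimpleGraph V} {c : V → α} (hc : Function.Injective c) :
    IsHarmonious G c :=
  ⟨fun _ _ h he => h.ne (hc he), fun _ _ _ _ _ _ h =>
    Sym2.map.injective hc (by simpa only [Sym2.map_mk] using h)⟩

lemma IsHarmonious.distAtLeastThree_of_eq {G : SimpleGraph V} {c : V → α}
    (hc : IsHarmonious G c) {u v : V} (hne : u ≠ v) (he : c u = c v) :
    DistAtLeastThree G u v := by
  refine ⟨hne, fun h => hc.1 h he, fun w ⟨huw, hwv⟩ => ?_⟩
  have hedge : s(c u, c w) = s(c v, c w) := by rw [he]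
  rcases Sym2.eq_iff.mp (hc.2 huw hwv.symm hedge) with ⟨h, -⟩ | ⟨h, h'⟩
  · exact hne h
  · exact hne (h.trans h')

lemma IsHarmonious.comp_hom {G : SimpleGraph V} {H : SimpleGraph W} (φ : G →g H)
    (hφ : ∀ ⦃a b x y : V⦄, G.Adj a b → G.Adj x y →
      s(φ a, φ b) = s(φ x, φ y) → s(a, b) = s(x, y))
    {d : W → α} (hd : IsHarmonious H d) : IsHarmonious G (d ∘ φ) :=
  ⟨fun _ _ h => hd.1 (φ.map_adj h), fun _ _ _ _ hab hxy h =>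
    hφ hab hxy (hd.2 (φ.map_adj hab) (φ.map_adj hxy) h)⟩

variable [Fintype V] [Fintype W]

lemma exists_isHarmonious_fin_hchrom (G : SimpleGraph V) :
    ∃ c : V → Fin (hchrom G), IsHarmonious G c :=
  Nat.sInf_mem (s := {k | ∃ c : V → Fin k, IsHarmonious G c}) ⟨Fintype.card V,
    Fintype.equivFin V, IsHarmonious.of_injective_s9 (Fintype.equivFin V).injective⟩

lemma hchrom_le {G : SimpleGraph V} {k : ℕ} {c : V → Fin k} (hc : IsHarmonious G c) :
    hchrom G ≤ k :=
  Nat.sInf_le ⟨c, hc⟩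

lemma hchrom_le_card (G : SimpleGraph V) : hchrom G ≤ Fintype.card V :=
  hchrom_le (IsHarmonious.of_injective_s9 (Fintype.equivFin V).injective)

lemma hchrom_le_of_hom {G : SimpleGraph V} {H : SimpleGraph W} (φ : G →g H)
    (hφ : ∀ ⦃a b x y : V⦄, G.Adj a b → G.Adj x y →
      s(φ a, φ b) = s(φ x, φ y) → s(a, b) = s(x, y)) :
    hchrom G ≤ hchrom H := by
  obtain ⟨d, hd⟩ := exists_isHarmonious_fin_hchrom H
  exact hchrom_le (hd.comp_hom φ hφ)

end Harmonious

lemma DistAtLeastThree.not_adj_of_sym2_eq {V : Type*} {G : SimpleGraph V} {u v : V}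
    (hd : DistAtLeastThree G u v) {a b : V} (h : s(a, b) = s(u, v)) : ¬ G.Adj a b := by
  rcases Sym2.eq_iff.mp h with ⟨rfl, rfl⟩ | ⟨rfl, rfl⟩
  · exact hd.2.1
  · exact fun hab => hd.2.1 hab.symm

section Identify

variable {V : Type*} [DecidableEq V] {u v : V}

def identifyProj (huv : u ≠ v) (t : V) : {x : V // x ≠ v} :=
  if h : t = v then ⟨u, huv⟩ else ⟨t, h⟩

lemma identifyProj_self (huv : u ≠ v) : identifyProj huv v = ⟨u, huv⟩ :=
  dif_pos rfl

lemma identifyProj_of_ne (huv : u ≠ v) {t : V} (ht : t ≠ v) : identifyProj huv t = ⟨t, ht⟩ :=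
  dif_neg ht

lemma identifyProj_val (huv : u ≠ v) (a : {x : V // x ≠ v}) : identifyProj huv a.1 = a :=
  identifyProj_of_ne huv a.2

lemma eq_or_eq_of_identifyProj_eq (huv : u ≠ v) {a b : V}
    (h : identifyProj huv a = identifyProj huv b) : a = b ∨ s(a, b) = s(u, v) := by
  by_cases ha : a = v <;> by_cases hb : b = v
  · exact .inl (ha.trans hb.symm)
  · rw [ha, identifyProj_self, identifyProj_of_ne huv hb, Subtype.mk.injEq] at h
    exact .inr (by rw [ha, ← h, Sym2.eq_swap])
  · rw [hb, identifyProj_self, identifyProj_of_ne huv ha, Subtype.mk.injEq] at h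
    exact .inr (by rw [hb, h])
  · rw [identifyProj_of_ne huv ha, identifyProj_of_ne huv hb, Subtype.mk.injEq] at h
    exact .inl h

lemma exists_adj_identifyProj_eq {G : SimpleGraph V} (huv : u ≠ v) {a b : {x : V // x ≠ v}}
    (h : (identify G u v).Adj a b) :
    ∃ a' b', G.Adj a' b' ∧ identifyProj huv a' = a ∧ identifyProj huv b' = b := by
  obtain ⟨-, hab | ⟨rfl, hvb⟩ | ⟨rfl, hav⟩⟩ := h
  · exact ⟨a, b, hab, identifyProj_val huv a, identifyProj_val huv b⟩
  · exact ⟨v, b, hvb, identifyProj_self huv, identifyProj_val huv b⟩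
  · exact ⟨a, v, hav, identifyProj_val huv a, identifyProj_self huv⟩

namespace DistAtLeastThree

variable {G : SimpleGraph V}

def identifyHom (hd : DistAtLeastThree G u v) : G →g identify G u v where
  toFun := identifyProj hd.1
  map_rel' {a b} hab := by
    refine ⟨fun h => ?_, ?_⟩
    · rcases eq_or_eq_of_identifyProj_eq hd.1 h with h | h
      exacts [hab.ne h, hd.not_adj_of_sym2_eq h hab]
    by_cases ha : a = v
    · subst ha
      refine .inr (.inl ⟨?_, ?_⟩) <;>
        simp only [identifyProj_self, identifyProj_of_ne hd.1 hab.ne.symm, hab]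
    by_cases hb : b = v
    · subst hb
      refine .inr (.inr ⟨?_, ?_⟩) <;>
        simp only [identifyProj_self, identifyProj_of_ne hd.1 ha, hab]
    · simpa only [identifyProj_of_ne hd.1 ha, identifyProj_of_ne hd.1 hb] using .inl hab

lemma eq_and_eq_of_identifyProj_eq (hd : DistAtLeastThree G u v) {a b x y : V}
    (hab : G.Adj a b) (hxy : G.Adj x y) (hax : identifyProj hd.1 a = identifyProj hd.1 x)
    (hby : identifyProj hd.1 b = identifyProj hd.1 y) : a = x ∧ b = y := by
  have hcommon := hd.2.2
  rcases eq_or_eq_of_identifyProj_eq hd.1 hax with rfl | hax <;>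
    rcases eq_or_eq_of_identifyProj_eq hd.1 hby with rfl | hby
  · exact ⟨rfl, rfl⟩
  · rcases Sym2.eq_iff.mp hby with ⟨rfl, rfl⟩ | ⟨rfl, rfl⟩
    exacts [(hcommon a ⟨hab.symm, hxy⟩).elim, (hcommon a ⟨hxy.symm, hab⟩).elim]
  · rcases Sym2.eq_iff.mp hax with ⟨rfl, rfl⟩ | ⟨rfl, rfl⟩
    exacts [(hcommon b ⟨hab, hxy.symm⟩).elim, (hcommon b ⟨hxy, hab.symm⟩).elim]
  · exact (hd.not_adj_of_sym2_eq (by grind [Sym2.eq_iff, hab.ne]) hab).elim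

lemma identifyHom_sym2_injective (hd : DistAtLeastThree G u v) ⦃a b x y : V⦄
    (hab : G.Adj a b) (hxy : G.Adj x y)
    (h : s(hd.identifyHom a, hd.identifyHom b) = s(hd.identifyHom x, hd.identifyHom y)) :
    s(a, b) = s(x, y) := by
  rcases Sym2.eq_iff.mp h with ⟨hax, hby⟩ | ⟨hay, hbx⟩
  · obtain ⟨rfl, rfl⟩ := hd.eq_and_eq_of_identifyProj_eq hab hxy hax hby
    rfl
  · obtain ⟨rfl, rfl⟩ := hd.eq_and_eq_of_identifyProj_eq hab hxy.symm hay hbx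
    exact Sym2.eq_swap

end DistAtLeastThree

lemma IsHarmonious.identify {α : Type*} {G : SimpleGraph V} {c : V → α} (hc : IsHarmonious G c)
    (huv : u ≠ v) (he : c u = c v) : IsHarmonious (identify G u v) (c ∘ Subtype.val) := by
  have hdesc : ∀ t, c (identifyProj huv t).1 = c t := fun t => by
    by_cases ht : t = v
    · rw [ht, identifyProj_self, he]
    · rw [identifyProj_of_ne huv ht]
  constructor
  · intro _ _ hab
    obtain ⟨a, b, hab', rfl, rfl⟩ := exists_adj_identifyProj_eq huv hab
    simpa only [Function.comp_apply, hdesc] using hc.1 hab'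
  · intro _ _ _ _ hab hxy h
    obtain ⟨a, b, hab', rfl, rfl⟩ := exists_adj_identifyProj_eq huv hab
    obtain ⟨x, y, hxy', rfl, rfl⟩ := exists_adj_identifyProj_eq huv hxy
    simp only [Function.comp_apply, hdesc] at h
    simpa only [Sym2.map_mk] using congrArg (Sym2.map (identifyProj huv)) (hc.2 hab' hxy' h)

variable [Fintype V]

lemma hchrom_le_hchrom_identify {G : SimpleGraph V} (hd : DistAtLeastThree G u v) :
    hchrom G ≤ hchrom (identify G u v) :=
  hchrom_le_of_hom hd.identifyHom hd.identifyHom_sym2_injective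

lemma hchrom_identify_le {G : SimpleGraph V} {k : ℕ} {c : V → Fin k} (hc : IsHarmonious G c)
    (huv : u ≠ v) (he : c u = c v) : hchrom (identify G u v) ≤ k :=
  hchrom_le (hc.identify huv he)

end Identify

/-- If `G` has diameter at least 3, some identification of vertices at distance
at least 3 preserves the harmonious chromatic number. -/
theorem stmt9 {V : Type*} [Fintype V] [DecidableEq V] (G : SimpleGraph V)
    (hdiam : ∃ u v : V, DistAtLeastThree G u v) :
    ∃ u v : V, DistAtLeastThree G u v ∧ hchrom (identify G u v) = hchrom G := by
  obtain ⟨c, hc⟩ := exists_isHarmonious_fin_hchrom G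
  by_cases hinj : Function.Injective c
  · obtain ⟨u, v, hd⟩ := hdiam
    have hcard_le : Fintype.card V ≤ hchrom G := by
      simpa only [Fintype.card_fin] using Fintype.card_le_of_injective c hinj
    have hcard_lt : Fintype.card {x : V // x ≠ v} < Fintype.card V :=
      Fintype.card_subtype_lt (p := (· ≠ v)) (not_not.mpr rfl)
    have hchrom_bound := (hchrom_le_hchrom_identify hd).trans (hchrom_le_card (identify G u v))
    omega
  · obtain ⟨a, b, he, hne⟩ := Function.not_injective_iff.mp hinj
    have hd := hc.distAtLeastThree_of_eq hne he
    exact ⟨a, b, hd, (hchrom_identify_le hc hne he).antisymm (hchrom_le_hchrom_identify hd)⟩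
end
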